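/- arXiv:1810.10625 — 2 statements merged into one kernel-verified Lean document; each statement's English description precedes it below -/
import Mathlib

section
/- Let ψ_1, …, ψ_K be orthonormal vectors in ℝ^N and let w ∈ ℝ^N have i.i.d. entries with zero mean and zero median (E[sign(w_1)] = 0), with μ = E[|w_1|] and σ² = E[w_1²] < ∞. Define Z_K = Σ_{k=1}^K sign(w)^T ψ_k (ψ_k^T w), where sign is applied entrywise with sign(0) = 0. Then E[Z_K] = K·μ and Var(Z_K) ≤ K·(σ² + μ²). -/
open MeasureTheory ProbabilityTheory
open scoped ProbabilityTheory

lemma aux_measurable_sign : Measurable Real.sign := by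
  unfold Real.sign
  exact Measurable.ite (measurableSet_lt measurable_id measurable_const)
    measurable_const <| Measurable.ite (measurableSet_lt measurable_const measurable_id)
    measurable_const measurable_const

lemma aux_sign_mul_self (x : ℝ) : Real.sign x * x = |x| := by
  rcases lt_trichotomy x 0 with h|h|h
  · rw [Real.sign_of_neg h, abs_of_neg h]; ring
  · simp [h]
  · rw [Real.sign_of_pos h, abs_of_pos h]; ring

lemma aux_abs_sign_le (x : ℝ) : |Real.sign x| ≤ 1 := by
  rcases lt_trichotomy x 0 with h|h|h
  · rw [Real.sign_of_neg h]; norm_num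
  · simp [h]
  · rw [Real.sign_of_pos h]; norm_num

lemma aux_master {Ω : Type*} [MeasureSpace Ω] [IsProbabilityMeasure (ℙ : Measure Ω)]
    {N : ℕ} {w : Ω → Fin N → ℝ}
    (hmeas : ∀ i, Measurable fun ω => w ω i)
    (hindep : iIndepFun (fun i ω => w ω i) ℙ)
    (g : Fin N → ℝ → ℝ) (hg : ∀ i, Measurable (g i))
    (hint : ∀ i, Integrable (fun ω => g i (w ω i)) ℙ)
    (s : Finset (Fin N)) :
    Integrable (fun ω => ∏ i ∈ s, g i (w ω i)) ℙ ∧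
      (∫ ω, ∏ i ∈ s, g i (w ω i)) = ∏ i ∈ s, ∫ ω, g i (w ω i) := by
  classical
  have hfam : iIndepFun (fun i ω => g i (w ω i)) ℙ :=
    hindep.comp g hg
  have hmeas' : ∀ i, Measurable fun ω => g i (w ω i) := fun i => (hg i).comp (hmeas i)
  induction s using Finset.induction_on with
  | empty => simp
  | @insert a s ha ih =>
    have hIF : IndepFun (∏ j ∈ s, fun ω => g j (w ω j)) (fun ω => g a (w ω a)) ℙ :=
      hfam.indepFun_finsetProd_of_notMem hmeas' ha
    have hfn : (∏ j ∈ s, fun ω => g j (w ω j)) = fun ω => ∏ j ∈ s, g j (w ω j) := by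
      funext ω; simp [Finset.prod_apply]
    rw [hfn] at hIF
    have hint2 : Integrable (fun ω => (∏ j ∈ s, g j (w ω j)) * g a (w ω a)) ℙ :=
      hIF.integrable_mul ih.1 (hint a)
    constructor
    · refine hint2.congr (Filter.Eventually.of_forall fun ω => ?_)
      show (∏ j ∈ s, g j (w ω j)) * g a (w ω a) = ∏ i ∈ insert a s, g i (w ω i)
      rw [Finset.prod_insert ha]; ring
    · have h1 : (∫ ω, ∏ i ∈ insert a s, g i (w ω i))
          = ∫ ω, (∏ j ∈ s, g j (w ω j)) * g a (w ω a) := by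
        refine integral_congr_ae (Filter.Eventually.of_forall fun ω => ?_)
        show (∏ i ∈ insert a s, g i (w ω i)) = (∏ j ∈ s, g j (w ω j)) * g a (w ω a)
        rw [Finset.prod_insert ha]; ring
      rw [h1, show (fun ω => (∏ j ∈ s, g j (w ω j)) * g a (w ω a))
          = (fun ω => ∏ j ∈ s, g j (w ω j)) * fun ω => g a (w ω a) from rfl]
      rw [hIF.integral_mul_eq_mul_integral ih.1.aestronglyMeasurable (hint a).aestronglyMeasurable, ih.2, Finset.prod_insert ha]
      ring


set_option maxHeartbeats 1600000 in
/-- For orthonormal vectors `ψ_1, …, ψ_K` in `ℝ^N` and `w` with i.i.d. entries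
of zero mean and zero median (`E[sign W] = 0`), `μ = E[|W|]`, `σ² = E[W²] < ∞`, the quantity
`Z_K = ∑_{k} (sign(w)^T ψ_k)(ψ_k^T w)` satisfies `E[Z_K] = K·μ` and
`Var(Z_K) ≤ K·(σ² + μ²)`. -/
theorem stmt_3 {Ω : Type*} [MeasureSpace Ω] [IsProbabilityMeasure (ℙ : Measure Ω)]
    {N K : ℕ} (ψ : Fin K → Fin N → ℝ)
    (horth : ∀ i j, ∑ m, ψ i m * ψ j m = if i = j then (1 : ℝ) else 0)
    (w : Ω → Fin N → ℝ)
    (hmeas : ∀ i, Measurable fun ω => w ω i)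
    (hindep : iIndepFun (fun i ω => w ω i) ℙ)
    (W : Ω → ℝ) (hWmeas : Measurable W)
    (hident : ∀ i, IdentDistrib (fun ω => w ω i) W ℙ ℙ)
    (hL2 : Integrable (fun ω => (W ω) ^ 2) ℙ)
    (hmean : ∫ ω, W ω = 0)
    (hmedian : ∫ ω, Real.sign (W ω) = 0)
    (μ σ : ℝ) (hμ : μ = ∫ ω, |W ω|) (hσ : σ ^ 2 = ∫ ω, (W ω) ^ 2)
    (Z : Ω → ℝ)
    (hZ : ∀ ω, Z ω = ∑ k,
      (∑ m, Real.sign (w ω m) * ψ k m) * (∑ m, ψ k m * w ω m)) :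
    (∫ ω, Z ω) = K * μ ∧ variance Z ℙ ≤ K * (σ ^ 2 + μ ^ 2) := by
  classical
  -- transfer lemma
  have hI : ∀ (v : ℝ → ℝ), Measurable v → (∀ x, |v x| ≤ 1 + x ^ 2) →
      (∀ i, Integrable (fun ω => v (w ω i)) ℙ) ∧
      (∀ i, (∫ ω, v (w ω i)) = ∫ ω, v (W ω)) := by
    intro v hv hb
    have hvW : Integrable (fun ω => v (W ω)) ℙ := by
      refine Integrable.mono (g := fun ω => 1 + (W ω) ^ 2) ((integrable_const 1).add hL2)
        (hv.comp hWmeas).aestronglyMeasurable ?_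
      filter_upwards with ω
      have h1 := hb (W ω)
      simp only [Real.norm_eq_abs]
      rw [abs_of_nonneg (by positivity : (0:ℝ) ≤ 1 + (W ω) ^ 2)]
      exact h1
    exact ⟨fun i => (((hident i).comp hv).integrable_iff).2 hvW,
      fun i => ((hident i).comp hv).integral_eq⟩
  set ν : ℝ := ∫ ω, (Real.sign (W ω)) ^ 2 with hν
  -- the matrix A
  set A : Fin N → Fin N → ℝ := fun m n => ∑ k, ψ k m * ψ k n with hA
  have hAsym : ∀ m n, A m n = A n m := fun m n =>
    Finset.sum_congr rfl fun k _ => mul_comm _ _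
  have htr : ∑ m, A m m = (K : ℝ) := by
    rw [hA]; rw [Finset.sum_comm]; simp [horth]
  have hAA : ∀ m p, ∑ n, A m n * A n p = A m p := by
    intro m p
    have h1 : ∀ n : Fin N, A m n * A n p = ∑ k, ∑ l, ψ k m * ψ l p * (ψ k n * ψ l n) := by
      intro n
      simp only [hA]
      rw [Finset.sum_mul_sum]
      exact Finset.sum_congr rfl fun k _ => Finset.sum_congr rfl fun l _ => by ring
    rw [Finset.sum_congr rfl fun n _ => h1 n, Finset.sum_comm]
    refine Finset.sum_congr rfl fun k _ => ?_
    rw [Finset.sum_comm]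
    have h2 : ∀ l, ∑ n, ψ k m * ψ l p * (ψ k n * ψ l n)
        = ψ k m * ψ l p * (if k = l then (1:ℝ) else 0) := by
      intro l; rw [← Finset.mul_sum, horth]
    rw [Finset.sum_congr rfl fun l _ => h2 l]
    simp [mul_ite, Finset.sum_ite_eq]
  have hK2 : ∑ m, ∑ n, A m n * A n m = (K : ℝ) := by
    calc ∑ m, ∑ n, A m n * A n m = ∑ m, A m m := Finset.sum_congr rfl fun m _ => hAA m m
    _ = (K : ℝ) := htr
  set S : ℝ := ∑ m, A m m * A m m with hS
  have hS_nonneg : 0 ≤ S := Finset.sum_nonneg fun m _ => mul_self_nonneg _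
  have hS_le : S ≤ (K : ℝ) := by
    rw [hS, ← hK2]
    refine Finset.sum_le_sum fun m _ => ?_
    have := Finset.single_le_sum (f := fun n => A m n * A n m)
      (fun n _ => by show (0:ℝ) ≤ A m n * A n m; rw [← hAsym m n]; exact mul_self_nonneg _) (Finset.mem_univ m)
    simpa using this
  -- rewrite Z
  have hZ' : ∀ ω, Z ω = ∑ m, ∑ n, A m n * (Real.sign (w ω m) * w ω n) := by
    intro ω
    rw [hZ ω]
    have h1 : ∀ m n, A m n * (Real.sign (w ω m) * w ω n)
        = ∑ k, Real.sign (w ω m) * ψ k m * (ψ k n * w ω n) := by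
      intro m n
      simp only [hA]
      rw [Finset.sum_mul]
      exact Finset.sum_congr rfl fun k _ => by ring
    have h2 : ∀ k : Fin K, (∑ m, Real.sign (w ω m) * ψ k m) * (∑ m, ψ k m * w ω m)
        = ∑ m, ∑ n, Real.sign (w ω m) * ψ k m * (ψ k n * w ω n) := by
      intro k; rw [Finset.sum_mul_sum]
    rw [Finset.sum_congr rfl fun k _ => h2 k, Finset.sum_comm]
    refine Finset.sum_congr rfl fun m _ => ?_
    rw [Finset.sum_comm]
    exact Finset.sum_congr rfl fun n _ => (h1 m n).symm
  -- two-factor key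
  have habs : ∀ ω, Real.sign (W ω) * W ω = |W ω| := fun ω => aux_sign_mul_self _
  have KEY1 : ∀ m n : Fin N, Integrable (fun ω => Real.sign (w ω m) * w ω n) ℙ ∧
      (∫ ω, Real.sign (w ω m) * w ω n) = if m = n then μ else 0 := by
    intro m n
    set g : Fin N → ℝ → ℝ := fun i x =>
      (if i = m then Real.sign x else 1) * (if i = n then x else 1) with hg
    have hgm : ∀ i, Measurable (g i) := by
      intro i
      apply Measurable.mul
      · by_cases h : i = m <;> simp [h, aux_measurable_sign]
      · by_cases h : i = n <;> simp [h, measurable_id']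
    have hgb : ∀ i x, |g i x| ≤ 1 + x ^ 2 := by
      intro i x
      have h1 : |if i = m then Real.sign x else 1| ≤ 1 := by
        split_ifs; exacts [aux_abs_sign_le x, by norm_num]
      have h2 : |if i = n then x else 1| ≤ 1 + x ^ 2 := by
        split_ifs
        · nlinarith [abs_nonneg x, sq_abs x, sq_nonneg (|x| - 1)]
        · rw [abs_one]; nlinarith [sq_nonneg x]
      calc |g i x| = |if i = m then Real.sign x else 1| * |if i = n then x else 1| :=
            abs_mul _ _
        _ ≤ 1 * (1 + x ^ 2) := mul_le_mul h1 h2 (abs_nonneg _) zero_le_one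
        _ = 1 + x ^ 2 := one_mul _
    have hpt : ∀ ω, (∏ i, g i (w ω i)) = Real.sign (w ω m) * w ω n := by
      intro ω
      simp only [hg]
      rw [Finset.prod_mul_distrib, Finset.prod_ite_eq', Finset.prod_ite_eq']
      simp
    have hm := aux_master hmeas hindep g hgm (fun i => (hI (g i) (hgm i) (hgb i)).1 i)
      Finset.univ
    constructor
    · exact hm.1.congr (Filter.Eventually.of_forall hpt)
    · have h2 : (∫ ω, Real.sign (w ω m) * w ω n) = ∏ i, ∫ ω, g i (w ω i) := by
        rw [← hm.2]
        exact integral_congr_ae (Filter.Eventually.of_forall fun ω => (hpt ω).symm)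
      rw [h2, Finset.prod_congr rfl fun i _ => (hI (g i) (hgm i) (hgb i)).2 i]
      by_cases hmn : m = n
      · subst hmn
        rw [if_pos rfl]
        rw [Finset.prod_eq_single m (fun i _ hi => by simp [hg, hi])
          (fun h => absurd (Finset.mem_univ m) h)]
        have : (∫ ω, g m (W ω)) = ∫ ω, |W ω| := by
          refine integral_congr_ae (Filter.Eventually.of_forall fun ω => ?_)
          simp only [hg, if_pos rfl]
          exact habs ω
        rw [this]
        exact hμ.symm
      · rw [if_neg hmn]
        refine Finset.prod_eq_zero (Finset.mem_univ m) ?_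
        simp only [hg, if_pos rfl, if_neg hmn, mul_one]
        exact hmedian
  -- four-factor key
  have KEY : ∀ m n p q : Fin N,
      Integrable (fun ω => Real.sign (w ω m) * Real.sign (w ω p) * (w ω n * w ω q)) ℙ ∧
      (∫ ω, Real.sign (w ω m) * Real.sign (w ω p) * (w ω n * w ω q))
        = if m = n ∧ p = q then (if m = p then σ ^ 2 else μ ^ 2)
          else if m = p ∧ n = q then ν * σ ^ 2
          else if m = q ∧ n = p then μ ^ 2 else 0 := by
    intro m n p q
    set g : Fin N → ℝ → ℝ := fun i x =>
      ((if i = m then Real.sign x else 1) * (if i = p then Real.sign x else 1)) *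
      ((if i = n then x else 1) * (if i = q then x else 1)) with hg
    have hgm : ∀ i, Measurable (g i) := by
      intro i
      refine Measurable.mul (Measurable.mul ?_ ?_) (Measurable.mul ?_ ?_)
      · by_cases h : i = m <;> simp [h, aux_measurable_sign]
      · by_cases h : i = p <;> simp [h, aux_measurable_sign]
      · by_cases h : i = n <;> simp [h, measurable_id']
      · by_cases h : i = q <;> simp [h, measurable_id']
    have hgb : ∀ i x, |g i x| ≤ 1 + x ^ 2 := by
      intro i x
      have hb1 : ∀ (c : Prop) (_ : Decidable c), |if c then x else 1| ≤ max 1 |x| := by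
        intro c _; split_ifs; exacts [le_max_right _ _, by simp]
      have hmax : max 1 |x| * max 1 |x| ≤ 1 + x ^ 2 := by
        rcases max_choice 1 |x| with h | h <;> rw [h] <;>
          nlinarith [abs_mul_abs_self x, sq_nonneg x, abs_nonneg x]
      have hxb : ∀ (c d : Prop) (_ : Decidable c) (_ : Decidable d),
          |(if c then x else 1) * (if d then x else 1)| ≤ 1 + x ^ 2 := by
        intro c d _ _
        rw [abs_mul]
        exact le_trans (mul_le_mul (hb1 c _) (hb1 d _) (abs_nonneg _)
          (le_trans zero_le_one (le_max_left _ _))) hmax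
      have hs1 : |if i = m then Real.sign x else 1| ≤ 1 := by
        split_ifs; exacts [aux_abs_sign_le x, by norm_num]
      have hs2 : |if i = p then Real.sign x else 1| ≤ 1 := by
        split_ifs; exacts [aux_abs_sign_le x, by norm_num]
      have h1 : |(if i = m then Real.sign x else 1) * (if i = p then Real.sign x else 1)| ≤ 1 := by
        rw [abs_mul]
        calc |if i = m then Real.sign x else 1| * |if i = p then Real.sign x else 1|
            ≤ 1 * 1 := mul_le_mul hs1 hs2 (abs_nonneg _) zero_le_one
          _ = 1 := one_mul 1
      have h2 : |(if i = n then x else 1) * (if i = q then x else 1)| ≤ 1 + x ^ 2 :=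
        hxb _ _ _ _
      calc |g i x| = |(if i = m then Real.sign x else 1) * (if i = p then Real.sign x else 1)|
            * |(if i = n then x else 1) * (if i = q then x else 1)| := abs_mul _ _
        _ ≤ 1 * (1 + x ^ 2) := mul_le_mul h1 h2 (abs_nonneg _) zero_le_one
        _ = 1 + x ^ 2 := one_mul _
    have hpt : ∀ ω, (∏ i, g i (w ω i))
        = Real.sign (w ω m) * Real.sign (w ω p) * (w ω n * w ω q) := by
      intro ω
      simp only [hg]
      rw [Finset.prod_mul_distrib, Finset.prod_mul_distrib, Finset.prod_mul_distrib,
        Finset.prod_ite_eq', Finset.prod_ite_eq', Finset.prod_ite_eq', Finset.prod_ite_eq']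
      simp
    have hm' := aux_master hmeas hindep g hgm (fun i => (hI (g i) (hgm i) (hgb i)).1 i)
      Finset.univ
    refine ⟨hm'.1.congr (Filter.Eventually.of_forall hpt), ?_⟩
    have h2 : (∫ ω, Real.sign (w ω m) * Real.sign (w ω p) * (w ω n * w ω q))
        = ∏ i, ∫ ω, g i (W ω) := by
      rw [← Finset.prod_congr rfl fun i _ => (hI (g i) (hgm i) (hgb i)).2 i, ← hm'.2]
      exact integral_congr_ae (Filter.Eventually.of_forall fun ω => (hpt ω).symm)
    rw [h2]
    have hone : ∀ i, i ≠ m → i ≠ p → i ≠ n → i ≠ q → (∫ ω, g i (W ω)) = 1 := by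
      intro i hm1 hp1 hn1 hq1
      have hgi : ∀ x, g i x = 1 := fun x => by simp [hg, hm1, hp1, hn1, hq1]
      rw [integral_congr_ae (Filter.Eventually.of_forall fun ω => hgi (W ω))]
      simp
    have hcsign : ∀ r, (∀ x, g r x = Real.sign x) → (∫ ω, g r (W ω)) = 0 := fun r hr =>
      (integral_congr_ae (Filter.Eventually.of_forall fun ω => hr (W ω))).trans hmedian
    have hcmean : ∀ r, (∀ x, g r x = x) → (∫ ω, g r (W ω)) = 0 := fun r hr =>
      (integral_congr_ae (Filter.Eventually.of_forall fun ω => hr (W ω))).trans hmean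
    have hcmu : ∀ r, (∀ x, g r x = Real.sign x * x) → (∫ ω, g r (W ω)) = μ := fun r hr =>
      (integral_congr_ae (Filter.Eventually.of_forall fun ω =>
        (hr (W ω)).trans (aux_sign_mul_self (W ω)))).trans hμ.symm
    by_cases h1 : m = n
    · subst h1
      by_cases h2 : p = q
      · subst h2
        by_cases h3 : m = p
        · subst h3
          rw [if_pos ⟨rfl, rfl⟩, if_pos rfl]
          rw [Finset.prod_eq_single m (fun i _ hi => hone i hi hi hi hi)
            (fun h => absurd (Finset.mem_univ m) h)]
          have hgm2 : ∀ x : ℝ, g m x = x ^ 2 := by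
            intro x
            have : ((if m = m then Real.sign x else 1) * (if m = m then Real.sign x else 1)) *
                ((if m = m then x else 1) * (if m = m then x else 1)) = x ^ 2 := by
              rw [if_pos rfl, if_pos rfl, mul_mul_mul_comm, aux_sign_mul_self, abs_mul_abs_self, pow_two]
            exact this
          rw [integral_congr_ae (Filter.Eventually.of_forall fun ω => hgm2 (W ω))]
          exact hσ.symm
        · rw [if_pos ⟨rfl, rfl⟩, if_neg h3]
          have hsub : (∏ i, ∫ ω, g i (W ω)) = ∏ i ∈ ({m, p} : Finset (Fin N)), ∫ ω, g i (W ω) := by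
            refine (Finset.prod_subset (Finset.subset_univ _) fun i _ hi => ?_).symm
            simp only [Finset.mem_insert, Finset.mem_singleton, not_or] at hi
            exact hone i hi.1 hi.2 hi.1 hi.2
          rw [hsub, Finset.prod_insert (by simp [h3]), Finset.prod_singleton]
          have hpm : p ≠ m := fun h => h3 h.symm
          have hcm : (∫ ω, g m (W ω)) = μ := hcmu m fun x => by
            simp [hg, h3]
          have hcp : (∫ ω, g p (W ω)) = μ := hcmu p fun x => by
            simp [hg, hpm]
          rw [hcm, hcp, sq]
      · rw [if_neg (fun hc => h2 hc.2), if_neg (fun hc : m = p ∧ m = q => h2 (hc.1.symm.trans hc.2)),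
          if_neg (fun hc : m = q ∧ m = p => h2 (hc.2.symm.trans hc.1))]
        rcases eq_or_ne q m with hqm | hqm
        · refine Finset.prod_eq_zero (Finset.mem_univ p) (hcsign p fun x => ?_)
          have hpm : p ≠ m := fun h => h2 (h.trans hqm.symm)
          have hpq : p ≠ q := h2
          simp [hg, hpm, hpq]
        · refine Finset.prod_eq_zero (Finset.mem_univ q) (hcmean q fun x => ?_)
          have hqp : q ≠ p := fun h => h2 h.symm
          simp [hg, hqm, hqp]
    · by_cases h2 : p = q
      · subst h2
        rw [if_neg (fun hc => h1 hc.1), if_neg (fun hc : m = p ∧ n = p => h1 (hc.1.trans hc.2.symm)),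
          if_neg (fun hc : m = p ∧ n = p => h1 (hc.1.trans hc.2.symm))]
        rcases eq_or_ne m p with hmp | hmp
        · refine Finset.prod_eq_zero (Finset.mem_univ n) (hcmean n fun x => ?_)
          have hnm : n ≠ m := fun h => h1 h.symm
          have hnp : n ≠ p := fun h => h1 (hmp.trans h.symm)
          simp [hg, hnm, hnp]
        · refine Finset.prod_eq_zero (Finset.mem_univ m) (hcsign m fun x => ?_)
          simp [hg, hmp, h1]
      · by_cases h3 : m = p
        · subst h3
          by_cases h4 : n = q
          · subst h4
            rw [if_neg (fun hc => h1 hc.1), if_pos ⟨rfl, rfl⟩]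
            have hsub : (∏ i, ∫ ω, g i (W ω))
                = ∏ i ∈ ({m, n} : Finset (Fin N)), ∫ ω, g i (W ω) := by
              refine (Finset.prod_subset (Finset.subset_univ _) fun i _ hi => ?_).symm
              simp only [Finset.mem_insert, Finset.mem_singleton, not_or] at hi
              exact hone i hi.1 hi.1 hi.2 hi.2
            rw [hsub, Finset.prod_insert (by simp [h1]), Finset.prod_singleton]
            have hcm : (∫ ω, g m (W ω)) = ν := by
              have h' : ∀ x : ℝ, g m x = (Real.sign x) ^ 2 := fun x => by
                simp [hg, h1, pow_two]
              rw [integral_congr_ae (Filter.Eventually.of_forall fun ω => h' (W ω))]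
            have hcn : (∫ ω, g n (W ω)) = σ ^ 2 := by
              have hnm : n ≠ m := fun h => h1 h.symm
              have h' : ∀ x : ℝ, g n x = x ^ 2 := fun x => by
                simp [hg, hnm, pow_two]
              rw [integral_congr_ae (Filter.Eventually.of_forall fun ω => h' (W ω))]
              exact hσ.symm
            rw [hcm, hcn]
          · rw [if_neg (fun hc => h1 hc.1), if_neg (fun hc : m = m ∧ n = q => h4 hc.2),
              if_neg (fun hc : m = q ∧ n = m => h2 hc.1)]
            refine Finset.prod_eq_zero (Finset.mem_univ q) (hcmean q fun x => ?_)
            have hqm : q ≠ m := fun h => h2 h.symm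
            have hqn : q ≠ n := fun h => h4 h.symm
            simp [hg, hqm, hqn]
        · by_cases h4 : n = q
          · subst h4
            rw [if_neg (fun hc => h1 hc.1), if_neg (fun hc : m = p ∧ n = n => h3 hc.1),
              if_neg (fun hc : m = n ∧ n = p => h1 hc.1)]
            refine Finset.prod_eq_zero (Finset.mem_univ m) (hcsign m fun x => ?_)
            simp [hg, h3, h1]
          · by_cases h5 : m = q
            · subst h5
              by_cases h6 : n = p
              · subst h6
                rw [if_neg (fun hc => h1 hc.1), if_neg (fun hc : m = n ∧ n = m => h1 hc.1),
                  if_pos ⟨rfl, rfl⟩]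
                have hsub : (∏ i, ∫ ω, g i (W ω))
                    = ∏ i ∈ ({m, n} : Finset (Fin N)), ∫ ω, g i (W ω) := by
                  refine (Finset.prod_subset (Finset.subset_univ _) fun i _ hi => ?_).symm
                  simp only [Finset.mem_insert, Finset.mem_singleton, not_or] at hi
                  exact hone i hi.1 hi.2 hi.2 hi.1
                rw [hsub, Finset.prod_insert (by simp [h1]), Finset.prod_singleton]
                have hcm : (∫ ω, g m (W ω)) = μ := hcmu m fun x => by
                  simp [hg, h1]
                have hcn : (∫ ω, g n (W ω)) = μ := by
                  refine hcmu n fun x => ?_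
                  have hnm : n ≠ m := fun h => h1 h.symm
                  simp [hg, hnm]
                rw [hcm, hcn, sq]
              · rw [if_neg (fun hc => h1 hc.1), if_neg (fun hc : m = p ∧ n = m => h3 hc.1),
                  if_neg (fun hc : m = m ∧ n = p => h6 hc.2)]
                refine Finset.prod_eq_zero (Finset.mem_univ p) (hcsign p fun x => ?_)
                have hpm : p ≠ m := fun h => h3 h.symm
                have hpn : p ≠ n := fun h => h6 h.symm
                simp [hg, hpm, hpn]
            · rw [if_neg (fun hc => h1 hc.1), if_neg (fun hc : m = p ∧ n = q => h4 hc.2),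
                if_neg (fun hc : m = q ∧ n = p => h5 hc.1)]
              refine Finset.prod_eq_zero (Finset.mem_univ q) (hcmean q fun x => ?_)
              have hqm : q ≠ m := fun h => h5 h.symm
              have hqp : q ≠ p := fun h => h2 h.symm
              have hqn : q ≠ n := fun h => h4 h.symm
              simp [hg, hqm, hqp, hqn]
  -- part 1
  have part1 : (∫ ω, Z ω) = K * μ := by
    have hintterm : ∀ m n : Fin N,
        Integrable (fun ω => A m n * (Real.sign (w ω m) * w ω n)) ℙ :=
      fun m n => ((KEY1 m n).1.const_mul _)
    calc (∫ ω, Z ω) = ∫ ω, ∑ m, ∑ n, A m n * (Real.sign (w ω m) * w ω n) :=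
          integral_congr_ae (Filter.Eventually.of_forall hZ')
      _ = ∑ m, ∑ n, A m n * (if m = n then μ else 0) := by
          rw [integral_finset_sum _
            (fun m _ => integrable_finset_sum _ (fun n _ => hintterm m n))]
          refine Finset.sum_congr rfl fun m _ => ?_
          rw [integral_finset_sum _ (fun n _ => hintterm m n)]
          refine Finset.sum_congr rfl fun n _ => ?_
          rw [integral_const_mul, (KEY1 m n).2]
      _ = ∑ m, A m m * μ := by
          refine Finset.sum_congr rfl fun m _ => ?_
          simp [mul_ite, Finset.sum_ite_eq]
      _ = (K : ℝ) * μ := by rw [← Finset.sum_mul, htr]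
  refine ⟨part1, ?_⟩
  -- part 2
  have hν0 : 0 ≤ ν := integral_nonneg fun ω => sq_nonneg _
  have hν1 : ν ≤ 1 := by
    rw [hν]
    calc (∫ ω, (Real.sign (W ω)) ^ 2) ≤ ∫ (_ : Ω), (1:ℝ) := by
          refine integral_mono ?_ (integrable_const 1) fun ω => ?_
          · refine (integrable_const (1:ℝ)).mono
              (((aux_measurable_sign.comp hWmeas).pow_const 2).aestronglyMeasurable) ?_
            filter_upwards with ω
            simp only [Real.norm_eq_abs, norm_one, abs_pow]
            nlinarith [aux_abs_sign_le (W ω), abs_nonneg (Real.sign (W ω))]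
          · nlinarith [aux_abs_sign_le (W ω), abs_nonneg (Real.sign (W ω)),
              sq_abs (Real.sign (W ω))]
      _ = 1 := by simp
  have hσ0 : 0 ≤ σ ^ 2 := hσ ▸ integral_nonneg fun ω => sq_nonneg _
  have hMemZ : MemLp Z 2 ℙ := by
    have hW2 : MemLp W 2 ℙ := (memLp_two_iff_integrable_sq hWmeas.aestronglyMeasurable).2 hL2
    have hwi2 : ∀ i, MemLp (fun ω => w ω i) 2 ℙ := fun i => (hident i).symm.memLp_snd hW2
    have hterm : ∀ m n : Fin N, MemLp (fun ω => A m n * (Real.sign (w ω m) * w ω n)) 2 ℙ := by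
      intro m n
      refine MemLp.of_le ((hwi2 n).const_mul (A m n))
        ((((aux_measurable_sign.comp (hmeas m)).mul (hmeas n)).const_mul
          (A m n)).aestronglyMeasurable) ?_
      filter_upwards with ω
      simp only [Real.norm_eq_abs, abs_mul]
      exact mul_le_mul_of_nonneg_left
        (mul_le_of_le_one_left (abs_nonneg (w ω n)) (aux_abs_sign_le (w ω m)))
        (abs_nonneg (A m n))
    have h0 : MemLp (fun ω => ∑ m, ∑ n, A m n * (Real.sign (w ω m) * w ω n)) 2 ℙ :=
      memLp_finset_sum _ fun m _ => memLp_finset_sum _ fun n _ => hterm m n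
    exact MemLp.ae_eq (Filter.Eventually.of_forall fun ω => (hZ' ω).symm) h0
  have hvar : variance Z ℙ = (∫ ω, (Z ω) ^ 2) - (∫ ω, Z ω) ^ 2 := by
    rw [variance_eq_sub hMemZ]
    rfl
  have hK2' : ∑ m, ∑ n, A m n * A m n = (K:ℝ) :=
    (Finset.sum_congr rfl fun m _ => Finset.sum_congr rfl fun n _ => by
      rw [hAsym n m]).trans hK2
  have hZ2 : (∫ ω, (Z ω) ^ 2) =
      (K:ℝ)^2 * μ^2 + S * (σ^2 - μ^2) + ((K:ℝ) - S) * (ν * σ^2) + ((K:ℝ) - S) * μ^2 := by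
    have hterm4 : ∀ m n p q : Fin N, Integrable (fun ω =>
        A m n * A p q * (Real.sign (w ω m) * Real.sign (w ω p) * (w ω n * w ω q))) ℙ :=
      fun m n p q => ((KEY m n p q).1.const_mul _)
    have step1 : (∫ ω, (Z ω) ^ 2) = ∑ m, ∑ p, ∑ n, ∑ q, A m n * A p q *
        (if m = n ∧ p = q then (if m = p then σ ^ 2 else μ ^ 2)
          else if m = p ∧ n = q then ν * σ ^ 2
          else if m = q ∧ n = p then μ ^ 2 else 0) := by
      have e1 : (∫ ω, (Z ω) ^ 2) = ∫ ω, ∑ m, ∑ p, ∑ n, ∑ q, A m n * A p q *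
          (Real.sign (w ω m) * Real.sign (w ω p) * (w ω n * w ω q)) := by
        refine integral_congr_ae (Filter.Eventually.of_forall fun ω => ?_)
        show Z ω ^ 2 = ∑ m, ∑ p, ∑ n, ∑ q, A m n * A p q *
          (Real.sign (w ω m) * Real.sign (w ω p) * (w ω n * w ω q))
        rw [hZ' ω, pow_two, Finset.sum_mul_sum]
        refine Finset.sum_congr rfl fun m _ => Finset.sum_congr rfl fun p _ => ?_
        rw [Finset.sum_mul_sum]
        exact Finset.sum_congr rfl fun n _ => Finset.sum_congr rfl fun q _ => by ring
      rw [e1, integral_finset_sum _ (fun m _ => integrable_finset_sum _ (fun p _ =>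
        integrable_finset_sum _ (fun n _ => integrable_finset_sum _
          (fun q _ => hterm4 m n p q))))]
      refine Finset.sum_congr rfl fun m _ => ?_
      rw [integral_finset_sum _ (fun p _ => integrable_finset_sum _
        (fun n _ => integrable_finset_sum _ (fun q _ => hterm4 m n p q)))]
      refine Finset.sum_congr rfl fun p _ => ?_
      rw [integral_finset_sum _ (fun n _ => integrable_finset_sum _
        (fun q _ => hterm4 m n p q))]
      refine Finset.sum_congr rfl fun n _ => ?_
      rw [integral_finset_sum _ (fun q _ => hterm4 m n p q)]
      refine Finset.sum_congr rfl fun q _ => ?_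
      rw [integral_const_mul, (KEY m n p q).2]
    have step2 : (∫ ω, (Z ω) ^ 2) = ∑ m, ∑ n, ∑ p, ∑ q, A m n * A p q *
        (if m = n ∧ p = q then (if m = p then σ ^ 2 else μ ^ 2)
          else if m = p ∧ n = q then ν * σ ^ 2
          else if m = q ∧ n = p then μ ^ 2 else 0) := by
      rw [step1]
      exact Finset.sum_congr rfl fun m _ => Finset.sum_comm
    rw [step2]
    have hdiag : ∀ m : Fin N, (∑ p, ∑ q, A m m * A p q *
        (if m = m ∧ p = q then (if m = p then σ ^ 2 else μ ^ 2)
          else if m = p ∧ m = q then ν * σ ^ 2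
          else if m = q ∧ m = p then μ ^ 2 else 0))
        = A m m * ((K:ℝ) * μ^2) + A m m * A m m * (σ^2 - μ^2) := by
      intro m
      have hV1 : ∀ p q : Fin N, (if m = m ∧ p = q then (if m = p then σ ^ 2 else μ ^ 2)
          else if m = p ∧ m = q then ν * σ ^ 2
          else if m = q ∧ m = p then μ ^ 2 else 0)
          = if p = q then (if m = p then σ ^ 2 else μ ^ 2) else 0 := by
        intro p q
        by_cases hpq : p = q
        · rw [if_pos ⟨rfl, hpq⟩, if_pos hpq]
        · rw [if_neg (fun hc => hpq hc.2), if_neg (fun hc : m = p ∧ m = q => hpq (hc.1.symm.trans hc.2)),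
            if_neg (fun hc : m = q ∧ m = p => hpq (hc.2.symm.trans hc.1)), if_neg hpq]
      rw [Finset.sum_congr rfl fun p _ => Finset.sum_congr rfl fun q _ => by rw [hV1 p q]]
      have e2 : ∀ p : Fin N, (∑ q, A m m * A p q *
          (if p = q then (if m = p then σ ^ 2 else μ ^ 2) else 0))
          = A m m * A p p * (if m = p then σ ^ 2 else μ ^ 2) := by
        intro p
        rw [Finset.sum_congr rfl fun q _ => (by split_ifs <;> ring :
          A m m * A p q * (if p = q then (if m = p then σ ^ 2 else μ ^ 2) else 0)
          = if p = q then A m m * A p q * (if m = p then σ ^ 2 else μ ^ 2) else 0)]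
        rw [Finset.sum_ite_eq]
        simp
      rw [Finset.sum_congr rfl fun p _ => e2 p]
      have e3 : ∀ p : Fin N, A m m * A p p * (if m = p then σ ^ 2 else μ ^ 2)
          = A m m * A p p * μ^2 + (if m = p then A m m * A p p * (σ^2 - μ^2) else 0) := by
        intro p; split_ifs <;> ring
      rw [Finset.sum_congr rfl fun p _ => e3 p, Finset.sum_add_distrib, Finset.sum_ite_eq]
      rw [Finset.sum_congr rfl (fun p (_ : p ∈ Finset.univ) =>
        (show A m m * A p p * μ^2 = A m m * μ^2 * A p p from by ring))]
      rw [← Finset.mul_sum, htr]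
      simp only [Finset.mem_univ, if_true]
      ring
    have hoff : ∀ m n : Fin N, m ≠ n → (∑ p, ∑ q, A m n * A p q *
        (if m = n ∧ p = q then (if m = p then σ ^ 2 else μ ^ 2)
          else if m = p ∧ n = q then ν * σ ^ 2
          else if m = q ∧ n = p then μ ^ 2 else 0))
        = A m n * A m n * (ν * σ^2) + A m n * A n m * μ^2 := by
      intro m n hmn
      have hV2 : ∀ p q : Fin N, (if m = n ∧ p = q then (if m = p then σ ^ 2 else μ ^ 2)
          else if m = p ∧ n = q then ν * σ ^ 2
          else if m = q ∧ n = p then μ ^ 2 else 0)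
          = (if n = q then (if m = p then ν * σ ^ 2 else 0) else 0)
            + (if m = q then (if n = p then μ ^ 2 else 0) else 0) := by
        intro p q
        by_cases hc1 : m = p ∧ n = q
        · rw [if_neg (fun hc => hmn hc.1), if_pos hc1, if_pos hc1.2, if_pos hc1.1,
            if_neg (fun h : m = q => hmn (h.trans hc1.2.symm))]
          ring
        · by_cases hc2 : m = q ∧ n = p
          · rw [if_neg (fun hc => hmn hc.1), if_neg hc1, if_pos hc2,
              if_neg (fun h : n = q => hmn (hc2.1.trans h.symm)), if_pos hc2.1, if_pos hc2.2]
            ring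
          · have r1 : (if n = q then (if m = p then ν * σ^2 else 0) else 0) = 0 := by
              by_cases h : n = q
              · rw [if_pos h, if_neg (fun h2 : m = p => hc1 ⟨h2, h⟩)]
              · rw [if_neg h]
            have r2 : (if m = q then (if n = p then μ ^ 2 else 0) else 0) = 0 := by
              by_cases h : m = q
              · rw [if_pos h, if_neg (fun h2 : n = p => hc2 ⟨h, h2⟩)]
              · rw [if_neg h]
            rw [if_neg (fun hc => hmn hc.1), if_neg hc1, if_neg hc2, r1, r2]
            ring
      rw [Finset.sum_congr rfl fun p (_ : p ∈ Finset.univ) =>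
        Finset.sum_congr rfl fun q (_ : q ∈ Finset.univ) => by rw [hV2 p q]]
      have e5 : ∀ p : Fin N, (∑ q, A m n * A p q *
          ((if n = q then (if m = p then ν * σ ^ 2 else 0) else 0)
          + (if m = q then (if n = p then μ ^ 2 else 0) else 0)))
          = A m n * A p n * (if m = p then ν * σ ^ 2 else 0)
            + A m n * A p m * (if n = p then μ ^ 2 else 0) := by
        intro p
        rw [Finset.sum_congr rfl fun q (_ : q ∈ Finset.univ) =>
          (show A m n * A p q * ((if n = q then (if m = p then ν * σ ^ 2 else 0) else 0)
            + (if m = q then (if n = p then μ ^ 2 else 0) else 0))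
          = (if n = q then A m n * A p q * (if m = p then ν * σ ^ 2 else 0) else 0)
            + (if m = q then A m n * A p q * (if n = p then μ ^ 2 else 0) else 0) from by
            split_ifs <;> ring)]
        rw [Finset.sum_add_distrib, Finset.sum_ite_eq, Finset.sum_ite_eq]
        simp
      rw [Finset.sum_congr rfl fun p (_ : p ∈ Finset.univ) => e5 p, Finset.sum_add_distrib]
      have s1 : ∑ p, A m n * A p n * (if m = p then ν * σ ^ 2 else 0)
          = A m n * A m n * (ν * σ^2) := by
        rw [Finset.sum_congr rfl fun p (_ : p ∈ Finset.univ) =>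
          (show A m n * A p n * (if m = p then ν * σ ^ 2 else 0)
            = if m = p then A m n * A p n * (ν * σ ^ 2) else 0 from by split_ifs <;> ring)]
        rw [Finset.sum_ite_eq]
        simp
      have s2 : ∑ p, A m n * A p m * (if n = p then μ ^ 2 else 0)
          = A m n * A n m * μ^2 := by
        rw [Finset.sum_congr rfl fun p (_ : p ∈ Finset.univ) =>
          (show A m n * A p m * (if n = p then μ ^ 2 else 0)
            = if n = p then A m n * A p m * μ ^ 2 else 0 from by split_ifs <;> ring)]
        rw [Finset.sum_ite_eq]
        simp
      rw [s1, s2]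
    have hinner : ∀ m n : Fin N, (∑ p, ∑ q, A m n * A p q *
        (if m = n ∧ p = q then (if m = p then σ ^ 2 else μ ^ 2)
          else if m = p ∧ n = q then ν * σ ^ 2
          else if m = q ∧ n = p then μ ^ 2 else 0))
        = (if m = n then ((K:ℝ)*μ^2) * A m m
            + (σ^2 - μ^2 - (ν * σ^2 + μ^2)) * (A m m * A m m) else 0)
          + (A m n * A m n * (ν * σ^2) + A m n * A n m * μ^2) := by
      intro m n
      by_cases h : m = n
      · subst h
        rw [hdiag m, if_pos rfl]
        ring
      · rw [hoff m n h, if_neg h]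
        ring
    rw [Finset.sum_congr rfl fun m (_ : m ∈ Finset.univ) =>
      Finset.sum_congr rfl fun n (_ : n ∈ Finset.univ) => hinner m n]
    rw [Finset.sum_congr rfl fun m (_ : m ∈ Finset.univ) =>
      Finset.sum_add_distrib (s := Finset.univ)]
    rw [Finset.sum_add_distrib]
    have t1 : ∑ m, ∑ n, (if m = n then ((K:ℝ)*μ^2) * A m m
        + (σ^2 - μ^2 - (ν * σ^2 + μ^2)) * (A m m * A m m) else 0)
        = ((K:ℝ)*μ^2) * (K:ℝ) + (σ^2 - μ^2 - (ν * σ^2 + μ^2)) * S := by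
      have : ∀ m : Fin N, (∑ n, if m = n then ((K:ℝ)*μ^2) * A m m
          + (σ^2 - μ^2 - (ν * σ^2 + μ^2)) * (A m m * A m m) else 0)
          = ((K:ℝ)*μ^2) * A m m + (σ^2 - μ^2 - (ν * σ^2 + μ^2)) * (A m m * A m m) := by
        intro m
        rw [Finset.sum_ite_eq]
        simp
      rw [Finset.sum_congr rfl fun m (_ : m ∈ Finset.univ) => this m, Finset.sum_add_distrib,
        ← Finset.mul_sum, ← Finset.mul_sum, htr, ← hS]
    have t2 : ∑ m, ∑ n, (A m n * A m n * (ν * σ^2) + A m n * A n m * μ^2)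
        = (K:ℝ) * (ν * σ^2) + (K:ℝ) * μ^2 := by
      rw [Finset.sum_congr rfl fun m (_ : m ∈ Finset.univ) =>
        Finset.sum_add_distrib (s := Finset.univ), Finset.sum_add_distrib]
      congr 1
      · rw [Finset.sum_congr rfl fun m (_ : m ∈ Finset.univ) =>
          (Finset.sum_mul _ _ _).symm, ← Finset.sum_mul, hK2']
      · rw [Finset.sum_congr rfl fun m (_ : m ∈ Finset.univ) =>
          (Finset.sum_mul _ _ _).symm, ← Finset.sum_mul, hK2]
    rw [t1, t2]
    ring
  rw [hvar, hZ2, part1]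
  nlinarith [mul_nonneg (mul_nonneg (sub_nonneg.2 hS_le) (sub_nonneg.2 hν1)) hσ0,
    mul_nonneg hS_nonneg (sq_nonneg μ)]
end

section
/- For each N let ψ_1^{(N)}, …, ψ_{K(N)}^{(N)} be orthonormal vectors in ℝ^N with K(N) ≤ N, and let w^{(N)} ∈ ℝ^N have i.i.d. entries with zero mean, variance σ² > 0, and |w_i| ≤ C₂ almost surely for a constant C₂ independent of N. Assume ‖ψ_k^{(N)}‖₁ ≤ C₁ log N for all k ≤ K(N) and some constant C₁, and max_{k ≤ K(N)} ‖ψ_k^{(N)}‖_∞ → 0 as N → ∞. Then the white box distortion Δ_W = ε‖Σ_{k=1}^{K(N)} ψ_k (ψ_k^T w)‖₁ satisfies lim_{N→∞} P(Δ_W ≤ ε·K(N)·(log N)²) = 1. Thus with the sparsifying front end the white box attack's impact is attenuated by a factor of O(K·polylog(N)/N) compared to the no-defense distortion Θ(N). -/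
open MeasureTheory ProbabilityTheory Filter
open scoped ProbabilityTheory

/-- For each `N`, let `ψ_1^{(N)}, …, ψ_{K(N)}^{(N)}` be orthonormal vectors in
`ℝ^N` with `‖ψ_k‖₁ ≤ C₁ log N` and `max_k ‖ψ_k‖_∞ → 0`, and let `w^{(N)}` have i.i.d. entries
with zero mean, variance `σ² > 0` and `|w_i| ≤ C₂` a.s. Then the white box distortion
`Δ_W = ε‖∑_k ψ_k (ψ_k^T w)‖₁` satisfies `P(Δ_W ≤ ε·K(N)·(log N)²) → 1` as `N → ∞`. -/
theorem stmt_7 {Ω : Type*} [MeasureSpace Ω] [IsProbabilityMeasure (ℙ : Measure Ω)]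
    (K : ℕ → ℕ) (hK : ∀ n, K n ≤ n)
    (ψ : ∀ n : ℕ, Fin (K n) → Fin n → ℝ)
    (horth : ∀ n i j, ∑ m, ψ n i m * ψ n j m = if i = j then (1 : ℝ) else 0)
    (w : ∀ n : ℕ, Ω → Fin n → ℝ)
    (hmeas : ∀ n i, Measurable fun ω => w n ω i)
    (hindep : ∀ n, iIndepFun (fun i ω => w n ω i) ℙ)
    (hident : ∀ n i j, IdentDistrib (fun ω => w n ω i) (fun ω => w n ω j) ℙ ℙ)
    (σ : ℝ) (hσ : 0 < σ)
    (hmean : ∀ n i, ∫ ω, w n ω i = 0)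
    (hvar : ∀ n i, ∫ ω, (w n ω i) ^ 2 = σ ^ 2)
    (C₂ : ℝ) (hbdd : ∀ n i, ∀ᵐ ω ∂ℙ, |w n ω i| ≤ C₂)
    (C₁ : ℝ) (hψ1 : ∀ n k, ∑ m, |ψ n k m| ≤ C₁ * Real.log n)
    (hψinf : ∀ η > 0, ∀ᶠ n : ℕ in Filter.atTop, ∀ k m, |ψ n k m| ≤ η)
    (ε : ℝ) (hε : 0 < ε)
    (Δ : ℕ → Ω → ℝ)
    (hΔ : ∀ n ω, Δ n ω = ε * ∑ i, |∑ k, (∑ m, ψ n k m * w n ω m) * ψ n k i|) :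
    Filter.Tendsto
      (fun n : ℕ => ℙ {ω | Δ n ω ≤ ε * K n * Real.log n ^ 2})
      Filter.atTop (nhds 1) := by
  classical
  set C : ℝ := max C₁ 1 with hCdef
  have hC1 : (1 : ℝ) ≤ C := le_max_right _ _
  have hC0 : (0 : ℝ) < C := lt_of_lt_of_le one_pos hC1
  -- integrability of the entries and of products of entries
  have hwint : ∀ n (m : Fin n), Integrable (fun ω => w n ω m) ℙ := fun n m =>
    (memLp_top_of_bound (hmeas n m).aestronglyMeasurable C₂
      (by simpa [Real.norm_eq_abs] using hbdd n m)).integrable le_top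
  have hwprod : ∀ n (m m' : Fin n), Integrable (fun ω => w n ω m * w n ω m') ℙ := by
    intro n m m'
    refine (memLp_top_of_bound ((hmeas n m).mul (hmeas n m')).aestronglyMeasurable
      (C₂ * C₂) ?_).integrable le_top
    filter_upwards [hbdd n m, hbdd n m'] with ω h1 h2
    rw [Real.norm_eq_abs, Pi.mul_apply, abs_mul]
    exact mul_le_mul h1 h2 (abs_nonneg _) ((abs_nonneg _).trans h1)
  -- second moments of the entries
  have hsecond : ∀ n (m m' : Fin n),
      (∫ ω, w n ω m * w n ω m') = if m = m' then σ ^ 2 else 0 := by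
    intro n m m'
    by_cases h : m = m'
    · subst h
      rw [if_pos rfl]
      simpa [pow_two] using hvar n m
    · rw [if_neg h]
      show integral ℙ ((fun ω => w n ω m) * fun ω => w n ω m') = 0
      rw [ProbabilityTheory.IndepFun.integral_mul_eq_mul_integral ((hindep n).indepFun h)
        (hwint n m).aestronglyMeasurable (hwint n m').aestronglyMeasurable]
      simp only [hmean n m, zero_mul]
  -- second moment of each coefficient c_k = ψ_k ⬝ w
  have hc2 : ∀ n (k : Fin (K n)), (∫ ω, (∑ m, ψ n k m * w n ω m) ^ 2) = σ ^ 2 := by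
    intro n k
    have hsq : ∀ ω, (∑ m, ψ n k m * w n ω m) ^ 2
        = ∑ m, ∑ m', (ψ n k m * ψ n k m') * (w n ω m * w n ω m') := by
      intro ω
      rw [pow_two, Finset.sum_mul_sum]
      exact Finset.sum_congr rfl fun m _ => Finset.sum_congr rfl fun m' _ => by ring
    calc (∫ ω, (∑ m, ψ n k m * w n ω m) ^ 2)
        = ∫ ω, ∑ m, ∑ m', (ψ n k m * ψ n k m') * (w n ω m * w n ω m') := by
          simp only [hsq]
      _ = ∑ m, ∑ m', (ψ n k m * ψ n k m') * ∫ ω, w n ω m * w n ω m' := by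
          rw [integral_finset_sum _ fun m _ =>
            integrable_finset_sum _ fun m' _ => (hwprod n m m').const_mul _]
          refine Finset.sum_congr rfl fun m _ => ?_
          rw [integral_finset_sum _ fun m' _ => (hwprod n m m').const_mul _]
          exact Finset.sum_congr rfl fun m' _ => integral_const_mul _ _
      _ = ∑ m, (ψ n k m * ψ n k m) * σ ^ 2 := by
          refine Finset.sum_congr rfl fun m _ => ?_
          rw [Finset.sum_eq_single m]
          · rw [hsecond n m m, if_pos rfl]
          · intro b _ hb
            rw [hsecond n m b, if_neg (fun h => hb h.symm), mul_zero]
          · intro h; exact absurd (Finset.mem_univ m) h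
      _ = σ ^ 2 := by rw [← Finset.sum_mul, horth n k k, if_pos rfl, one_mul]
  -- measurability and integrability of the coefficients
  have hcmeas : ∀ n (k : Fin (K n)), Measurable fun ω => ∑ m, ψ n k m * w n ω m :=
    fun n k => Finset.measurable_sum _ fun m _ => (hmeas n m).const_mul _
  have hcbound : ∀ n (k : Fin (K n)),
      ∀ᵐ ω ∂ℙ, |∑ m, ψ n k m * w n ω m| ≤ (∑ m, |ψ n k m|) * C₂ := by
    intro n k
    filter_upwards [ae_all_iff.2 (hbdd n)] with ω hω
    calc |∑ m, ψ n k m * w n ω m| ≤ ∑ m, |ψ n k m * w n ω m| :=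
          Finset.abs_sum_le_sum_abs _ _
      _ ≤ ∑ m, |ψ n k m| * C₂ := Finset.sum_le_sum fun m _ => by
          rw [abs_mul]; exact mul_le_mul_of_nonneg_left (hω m) (abs_nonneg _)
      _ = (∑ m, |ψ n k m|) * C₂ := by rw [Finset.sum_mul]
  have hc2int : ∀ n (k : Fin (K n)),
      Integrable (fun ω => (∑ m, ψ n k m * w n ω m) ^ 2) ℙ := by
    intro n k
    refine (memLp_top_of_bound ((hcmeas n k).pow_const 2).aestronglyMeasurable
      (((∑ m, |ψ n k m|) * C₂) ^ 2) ?_).integrable le_top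
    filter_upwards [hcbound n k] with ω hω
    rw [Real.norm_eq_abs, abs_pow]
    exact pow_le_pow_left₀ (abs_nonneg _) hω 2
  have habs_int : ∀ n (k : Fin (K n)),
      Integrable (fun ω => |∑ m, ψ n k m * w n ω m|) ℙ := fun n k =>
    (integrable_finset_sum _ fun m _ => (hwint n m).const_mul _).abs
  -- first absolute moment bound
  have hEabs : ∀ n (k : Fin (K n)), (∫ ω, |∑ m, ψ n k m * w n ω m|) ≤ 1 + σ ^ 2 := by
    intro n k
    have hle : ∀ ω, |∑ m, ψ n k m * w n ω m| ≤ 1 + (∑ m, ψ n k m * w n ω m) ^ 2 := by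
      intro ω
      nlinarith [sq_nonneg (|∑ m, ψ n k m * w n ω m| - 1),
        sq_abs (∑ m, ψ n k m * w n ω m), abs_nonneg (∑ m, ψ n k m * w n ω m)]
    calc (∫ ω, |∑ m, ψ n k m * w n ω m|)
        ≤ ∫ ω, (1 + (∑ m, ψ n k m * w n ω m) ^ 2) :=
          integral_mono (habs_int n k) ((integrable_const 1).add (hc2int n k)) hle
      _ = 1 + σ ^ 2 := by
          rw [integral_add (integrable_const 1) (hc2int n k), integral_const, hc2 n k]
          simp
  have hXint : ∀ n, Integrable (fun ω => ∑ k : Fin (K n), |∑ m, ψ n k m * w n ω m|) ℙ :=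
    fun n => integrable_finset_sum _ fun k _ => habs_int n k
  have hEX : ∀ n, (∫ ω, ∑ k : Fin (K n), |∑ m, ψ n k m * w n ω m|)
      ≤ (K n : ℝ) * (1 + σ ^ 2) := by
    intro n
    rw [integral_finset_sum _ fun k _ => habs_int n k]
    calc (∑ k : Fin (K n), ∫ ω, |∑ m, ψ n k m * w n ω m|)
        ≤ ∑ _k : Fin (K n), (1 + σ ^ 2) := Finset.sum_le_sum fun k _ => hEabs n k
      _ = (K n : ℝ) * (1 + σ ^ 2) := by
          simp [Finset.sum_const, nsmul_eq_mul]
          ring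
  -- measurability of Δ and the event
  have hΔmeas : ∀ n, Measurable (Δ n) := by
    intro n
    have h : Δ n = fun ω => ε * ∑ i, |∑ k, (∑ m, ψ n k m * w n ω m) * ψ n k i| :=
      funext (hΔ n)
    rw [h]
    exact (Finset.measurable_sum _ fun i _ =>
      (Finset.measurable_sum _ fun k _ => (hcmeas n k).mul_const _).abs).const_mul _
  have hBmeas : ∀ n, MeasurableSet {ω | Δ n ω ≤ ε * K n * Real.log n ^ 2} :=
    fun n => measurableSet_le (hΔmeas n) measurable_const
  -- deterministic bound
  have hdet : ∀ n : ℕ, 0 ≤ Real.log n → ∀ ω,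
      Δ n ω ≤ ε * ((C * Real.log n) * ∑ k : Fin (K n), |∑ m, ψ n k m * w n ω m|) := by
    intro n hlog ω
    rw [hΔ n ω]
    refine mul_le_mul_of_nonneg_left ?_ hε.le
    calc (∑ i, |∑ k, (∑ m, ψ n k m * w n ω m) * ψ n k i|)
        ≤ ∑ i, ∑ k, |(∑ m, ψ n k m * w n ω m) * ψ n k i| :=
          Finset.sum_le_sum fun i _ => Finset.abs_sum_le_sum_abs _ _
      _ = ∑ k, ∑ i, |∑ m, ψ n k m * w n ω m| * |ψ n k i| := by
          rw [Finset.sum_comm]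
          exact Finset.sum_congr rfl fun k _ => Finset.sum_congr rfl fun i _ => abs_mul _ _
      _ = ∑ k, |∑ m, ψ n k m * w n ω m| * ∑ i, |ψ n k i| := by
          exact Finset.sum_congr rfl fun k _ => (Finset.mul_sum _ _ _).symm
      _ ≤ ∑ k, |∑ m, ψ n k m * w n ω m| * (C * Real.log n) :=
          Finset.sum_le_sum fun k _ => mul_le_mul_of_nonneg_left
            (le_trans (hψ1 n k) (mul_le_mul_of_nonneg_right (le_max_left _ _) hlog))
            (abs_nonneg _)
      _ = (C * Real.log n) * ∑ k : Fin (K n), |∑ m, ψ n k m * w n ω m| := by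
          rw [← Finset.sum_mul, mul_comm]
  -- eventual bound on the complement
  have hbound : ∀ᶠ n : ℕ in atTop,
      ℙ {ω | Δ n ω ≤ ε * K n * Real.log n ^ 2}ᶜ
        ≤ ENNReal.ofReal (C * (1 + σ ^ 2) / Real.log n) := by
    filter_upwards [eventually_ge_atTop 2] with n hn
    have hn1 : (1 : ℝ) < n := by exact_mod_cast hn
    have hlog : 0 < Real.log n := Real.log_pos hn1
    by_cases hKn : K n = 0
    · have hB : {ω | Δ n ω ≤ ε * K n * Real.log n ^ 2} = Set.univ := by
        ext ω
        simp only [Set.mem_setOf_eq, Set.mem_univ, iff_true]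
        haveI : IsEmpty (Fin (K n)) := by rw [hKn]; infer_instance
        rw [hΔ n ω]
        simp [hKn]
      rw [hB, Set.compl_univ]
      simp
    · have hK1 : (1 : ℝ) ≤ (K n : ℝ) := by exact_mod_cast Nat.one_le_iff_ne_zero.2 hKn
      have hKpos : (0 : ℝ) < (K n : ℝ) := lt_of_lt_of_le one_pos hK1
      set t : ℝ := (K n : ℝ) * Real.log n / C with ht
      have ht0 : 0 < t := div_pos (mul_pos hKpos hlog) hC0
      have hmar := mul_meas_ge_le_integral_of_nonneg (μ := ℙ)
        (f := fun ω => ∑ k : Fin (K n), |∑ m, ψ n k m * w n ω m|)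
        (ae_of_all _ fun ω => Finset.sum_nonneg fun k _ => abs_nonneg _) (hXint n) t
      have hsub : {ω | Δ n ω ≤ ε * K n * Real.log n ^ 2}ᶜ
          ⊆ {ω | t ≤ ∑ k : Fin (K n), |∑ m, ψ n k m * w n ω m|} := by
        intro ω hω
        simp only [Set.mem_compl_iff, Set.mem_setOf_eq] at hω ⊢
        by_contra hlt
        push_neg at hlt
        apply hω
        refine le_trans (hdet n hlog.le ω) ?_
        have hXC : (∑ k : Fin (K n), |∑ m, ψ n k m * w n ω m|) * C < (K n : ℝ) * Real.log n :=
          (lt_div_iff₀ hC0).mp hlt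
        nlinarith [mul_le_mul_of_nonneg_left hXC.le (mul_nonneg hε.le hlog.le)]
      refine le_trans (measure_mono hsub) ?_
      rw [ENNReal.le_ofReal_iff_toReal_le (measure_ne_top _ _)
        (by positivity)]
      have h1 : (ℙ {ω | t ≤ ∑ k : Fin (K n), |∑ m, ψ n k m * w n ω m|}).toReal
          ≤ ((K n : ℝ) * (1 + σ ^ 2)) / t := by
        rw [le_div_iff₀ ht0]
        calc (ℙ _).toReal * t = t * (ℙ _).toReal := mul_comm _ _
          _ ≤ ∫ ω, ∑ k : Fin (K n), |∑ m, ψ n k m * w n ω m| := hmar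
          _ ≤ (K n : ℝ) * (1 + σ ^ 2) := hEX n
      refine le_trans h1 (le_of_eq ?_)
      rw [ht]
      field_simp
  -- conclude
  have hlim0 : Tendsto (fun n : ℕ => ℙ {ω | Δ n ω ≤ ε * K n * Real.log n ^ 2}ᶜ)
      atTop (nhds 0) := by
    have h1 : Tendsto (fun n : ℕ => ENNReal.ofReal (C * (1 + σ ^ 2) / Real.log n))
        atTop (nhds 0) := by
      rw [show (0 : ENNReal) = ENNReal.ofReal 0 by simp]
      exact ENNReal.tendsto_ofReal
        (Tendsto.div_atTop tendsto_const_nhds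
          (Real.tendsto_log_atTop.comp tendsto_natCast_atTop_atTop))
    exact tendsto_of_tendsto_of_tendsto_of_le_of_le' tendsto_const_nhds h1
      (Eventually.of_forall fun n => zero_le) hbound
  have hcompl : ∀ n, ℙ {ω | Δ n ω ≤ ε * K n * Real.log n ^ 2}
      = 1 - ℙ {ω | Δ n ω ≤ ε * K n * Real.log n ^ 2}ᶜ := by
    intro n
    conv_lhs => rw [← compl_compl {ω | Δ n ω ≤ ε * K n * Real.log n ^ 2}]
    rw [prob_compl_eq_one_sub (hBmeas n).compl]
  simp only [hcompl]
  have hfin := ((ENNReal.continuous_sub_left ENNReal.one_ne_top).tendsto 0).comp hlim0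
  simpa [Function.comp_def] using hfin
end
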